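/- arXiv:1303.5153 — 3 statements merged into one kernel-verified Lean document; each statement's English description precedes it below -/
import Mathlib

section
/- Representer theorem (exact interpolation/regularization form): Let H be a real Hilbert space, let η_1,...,η_n ∈ H, and let C : ℝⁿ → ℝ be any function. Then for any minimizer f* of the functional f ↦ C(⟨η_1,f⟩,...,⟨η_n,f⟩) + λ‖f‖², with λ > 0, f* lies in the span of η_1,...,η_n. More precisely, for any f ∈ H, writing f = f₀ + f₁ with f₀ ∈ span{η_i} and f₁ ⊥ span{η_i}, the objective at f₀ is no larger than at f. -/
/-!
Split `f = f₀ + f₁` with `f₀` in `K = span {ηᵢ}` and `f₁ ⊥ K`. The data `⟪ηᵢ, f⟫` only see `f₀`,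
and Pythagoras gives `‖f‖² = ‖f₀‖² + ‖f₁‖²`, so the objective at `f` exceeds the objective at `f₀`
by exactly `λ‖f₁‖²`. As `K` is finite-dimensional, every `f` splits this way, and a minimizer must
have `f₁ = 0`.
-/

open InnerProductSpace

namespace Submodule

variable {H : Type*} [NormedAddCommGroup H] [InnerProductSpace ℝ H] {K : Submodule ℝ H}

theorem inner_add_right_of_mem_orthogonal {u f₁ : H} (hu : u ∈ K) (hf₁ : f₁ ∈ Kᗮ) (f₀ : H) :
    ⟪u, f₀ + f₁⟫_ℝ = ⟪u, f₀⟫_ℝ := by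
  rw [inner_add_right, inner_right_of_mem_orthogonal hu hf₁, add_zero]

theorem norm_add_sq_of_mem_orthogonal {f₀ f₁ : H} (hf₀ : f₀ ∈ K) (hf₁ : f₁ ∈ Kᗮ) :
    ‖f₀ + f₁‖ ^ 2 = ‖f₀‖ ^ 2 + ‖f₁‖ ^ 2 := by
  simpa only [sq] using
    norm_add_sq_eq_norm_sq_add_norm_sq_real (inner_right_of_mem_orthogonal hf₀ hf₁)

end Submodule

theorem regularized_objective_add_of_mem_orthogonal {H ι : Type*} [NormedAddCommGroup H]
    [InnerProductSpace ℝ H] (η : ι → H) (C : (ι → ℝ) → ℝ) (lam : ℝ) {f₀ f₁ : H}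
    (hf₀ : f₀ ∈ Submodule.span ℝ (Set.range η)) (hf₁ : f₁ ∈ (Submodule.span ℝ (Set.range η))ᗮ) :
    C (fun i => ⟪η i, f₀ + f₁⟫_ℝ) + lam * ‖f₀ + f₁‖ ^ 2 =
      C (fun i => ⟪η i, f₀⟫_ℝ) + lam * ‖f₀‖ ^ 2 + lam * ‖f₁‖ ^ 2 := by
  have hdata : (fun i => ⟪η i, f₀ + f₁⟫_ℝ) = fun i => ⟪η i, f₀⟫_ℝ :=
    funext fun i => Submodule.inner_add_right_of_mem_orthogonal
      (Submodule.subset_span (Set.mem_range_self i)) hf₁ f₀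
  rw [hdata, Submodule.norm_add_sq_of_mem_orthogonal hf₀ hf₁]
  ring

theorem representer_theorem_general
    {H : Type*} [NormedAddCommGroup H] [InnerProductSpace ℝ H]
    {n : ℕ} (η : Fin n → H) (C : (Fin n → ℝ) → ℝ) (lam : ℝ) (hlam : 0 < lam)
    (J : H → ℝ)
    (hJ : ∀ f, J f = C (fun i => ⟪η i, f⟫_ℝ) + lam * ‖f‖ ^ 2) :
    (∀ fstar : H, (∀ f, J fstar ≤ J f) →
        fstar ∈ Submodule.span ℝ (Set.range η)) ∧
    (∀ f f₀ f₁ : H, f = f₀ + f₁ →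
        f₀ ∈ Submodule.span ℝ (Set.range η) →
        (∀ g ∈ Submodule.span ℝ (Set.range η), ⟪f₁, g⟫_ℝ = 0) →
        J f₀ ≤ J f) := by
  set K := Submodule.span ℝ (Set.range η)
  have hJ_add {f₀ f₁ : H} (hf₀ : f₀ ∈ K) (hf₁ : f₁ ∈ Kᗮ) :
      J (f₀ + f₁) = J f₀ + lam * ‖f₁‖ ^ 2 := by
    rw [hJ, hJ, regularized_objective_add_of_mem_orthogonal η C lam hf₀ hf₁]
  refine ⟨fun fstar hmin => ?_, fun f f₀ f₁ hf hf₀ hf₁ => ?_⟩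
  · have : FiniteDimensional ℝ K := FiniteDimensional.span_of_finite ℝ (Set.finite_range η)
    obtain ⟨f₀, hf₀, f₁, hf₁, rfl⟩ := K.exists_add_mem_mem_orthogonal fstar
    have hpenalty : lam * ‖f₁‖ ^ 2 ≤ 0 := by linarith [hmin f₀, hJ_add hf₀ hf₁]
    have hf₁_zero : f₁ = 0 := by
      simpa [hlam.ne'] using le_antisymm hpenalty (by positivity)
    rwa [hf₁_zero, add_zero]
  · rw [hf, hJ_add hf₀ ((K.mem_orthogonal' f₁).2 hf₁)]
    exact le_add_of_nonneg_right (by positivity)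

/-- Representer theorem: any minimizer of
`f ↦ C(⟪η₁,f⟫,…,⟪ηₙ,f⟫) + λ‖f‖²` lies in the span of the representers `ηᵢ`;
more precisely, for `f = f₀ + f₁` with `f₀` in the span and `f₁` orthogonal to it,
the objective at `f₀` is no larger than at `f`. -/
theorem representer_theorem
    {H : Type*} [NormedAddCommGroup H] [InnerProductSpace ℝ H] [CompleteSpace H]
    {n : ℕ} (η : Fin n → H) (C : (Fin n → ℝ) → ℝ) (lam : ℝ) (hlam : 0 < lam)
    (J : H → ℝ)
    (hJ : ∀ f, J f = C (fun i => ⟪η i, f⟫_ℝ) + lam * ‖f‖ ^ 2) :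
    (∀ fstar : H, (∀ f, J fstar ≤ J f) →
        fstar ∈ Submodule.span ℝ (Set.range η)) ∧
    (∀ f f₀ f₁ : H, f = f₀ + f₁ →
        f₀ ∈ Submodule.span ℝ (Set.range η) →
        (∀ g ∈ Submodule.span ℝ (Set.range η), ⟪f₁, g⟫_ℝ = 0) →
        J f₀ ≤ J f) :=
  representer_theorem_general η C lam hlam J hJ
end

section
/- Representer theorem with null space: Let H be a real Hilbert space, H₀ a closed subspace (the null space of the penalty), P the orthogonal projection onto H₀^⊥, and η_1,...,η_n ∈ H. Any minimizer of f ↦ C(⟨η_1,f⟩,...,⟨η_n,f⟩) + λ‖Pf‖² over H can be taken in the set span{P η_1,...,P η_n} + H₀: that is, projecting the component of f orthogonal to H₀ onto span{Pη_i} does not increase the objective and does not change the values ⟨η_i, f⟩ beyond what projection in the penalized component allows—formally, for any f, the element f' = f₀ + Q(Pf), where f₀ is the H₀-component of f and Q is orthogonal projection onto span{Pη_1,...,Pη_n}, satisfies ⟨η_i, f'⟩-based data fit plus λ‖Pf'‖² ≤ the objective at f whenever replacing Pf by Q(Pf) leaves all ⟨η_i,f⟩ unchanged, which holds since ⟨η_i,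 Pf - Q(Pf)⟩ = ⟨Pη_i, Pf - Q(Pf)⟩ = 0. -/
/-!
Write `P` for the projection onto `H₀ᗮ`. Since `P` is self-adjoint and fixes `H₀ᗮ`,
the functional `⟪ηᵢ, ·⟫` agrees with `⟪P ηᵢ, ·⟫` on `H₀ᗮ`; as `P ηᵢ` lies in `S`, this
functional is unchanged by the projection onto `S`. Hence `f'` has the same data as `f`,
while `P f'` is the projection of `P f` onto `S` and so has no larger norm.
-/

open InnerProductSpace

namespace Submodule

variable {H : Type*} [NormedAddCommGroup H] [InnerProductSpace ℝ H]

theorem inner_starProjection_left_of_mem (U : Submodule ℝ H) [U.HasOrthogonalProjection]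
    (η : H) {x : H} (hx : x ∈ U) : ⟪U.starProjection η, x⟫_ℝ = ⟪η, x⟫_ℝ := by
  rw [inner_starProjection_left_eq_right, starProjection_eq_self_iff.2 hx]

theorem inner_starProjection_of_le_of_starProjection_mem {U S : Submodule ℝ H}
    [U.HasOrthogonalProjection] [S.HasOrthogonalProjection] (hSU : S ≤ U) {η x : H}
    (hη : U.starProjection η ∈ S) (hx : x ∈ U) :
    ⟪η, S.starProjection x⟫_ℝ = ⟪η, x⟫_ℝ :=
  calc ⟪η, S.starProjection x⟫_ℝ
      = ⟪U.starProjection η, S.starProjection x⟫_ℝ :=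
        (U.inner_starProjection_left_of_mem η (hSU (S.starProjection_apply_mem x))).symm
    _ = ⟪S.starProjection (U.starProjection η), x⟫_ℝ :=
        (inner_starProjection_left_eq_right S _ _).symm
    _ = ⟪U.starProjection η, x⟫_ℝ := by rw [starProjection_eq_self_iff.2 hη]
    _ = ⟪η, x⟫_ℝ := U.inner_starProjection_left_of_mem η hx

theorem starProjection_add_of_mem_orthogonal_of_mem {U : Submodule ℝ H}
    [U.HasOrthogonalProjection] {x y : H} (hx : x ∈ Uᗮ) (hy : y ∈ U) :
    U.starProjection (x + y) = y := by
  rw [map_add, (starProjection_apply_eq_zero_iff U).2 hx, starProjection_eq_self_iff.2 hy, zero_add]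

end Submodule

open Submodule

theorem representer_theorem_with_null_space_general
    {H : Type*} [NormedAddCommGroup H] [InnerProductSpace ℝ H]
    (H₀ : Submodule ℝ H) [CompleteSpace H₀]
    {n : ℕ} (η : Fin n → H) (C : (Fin n → ℝ) → ℝ) (lam : ℝ) (hlam : 0 < lam)
    (P : H → H) (hP : ∀ g, P g = (Submodule.orthogonalProjectionOnto H₀ᗮ g : H))
    (S : Submodule ℝ H) (hS : S = Submodule.span ℝ (Set.range fun i => P (η i)))
    [CompleteSpace S]
    (f f' : H) (hf' : f' = (Submodule.orthogonalProjectionOnto H₀ f : H) + (Submodule.orthogonalProjectionOnto S (P f) : H)) :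
    C (fun i => ⟪η i, f'⟫_ℝ) + lam * ‖P f'‖ ^ 2 ≤
      C (fun i => ⟪η i, f⟫_ℝ) + lam * ‖P f‖ ^ 2 := by
  obtain rfl : P = H₀ᗮ.starProjection := funext hP
  simp only [coe_orthogonalProjectionOnto_apply] at hf'
  have hPη (i : Fin n) : H₀ᗮ.starProjection (η i) ∈ S := hS ▸ subset_span ⟨i, rfl⟩
  have hSle : S ≤ H₀ᗮ :=
    hS ▸ span_le.2 (Set.range_subset_iff.2 fun i => starProjection_apply_mem _ _)
  have hPf' : H₀ᗮ.starProjection f' = S.starProjection (H₀ᗮ.starProjection f) := by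
    rw [hf']
    exact starProjection_add_of_mem_orthogonal_of_mem
      (le_orthogonal_orthogonal _ (starProjection_apply_mem _ _))
      (hSle (starProjection_apply_mem _ _))
  have hdata : (fun i => ⟪η i, f'⟫_ℝ) = fun i => ⟪η i, f⟫_ℝ := by
    funext i
    conv_rhs => rw [← H₀.starProjection_add_starProjection_orthogonal f]
    rw [hf', inner_add_right, inner_add_right,
      inner_starProjection_of_le_of_starProjection_mem hSle (hPη i) (starProjection_apply_mem _ _)]
  rw [hdata, hPf']
  have hnorm := norm_starProjection_apply_le S (H₀ᗮ.starProjection f)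
  gcongr

/-- Representer theorem with a null space `H₀`: with `P` orthogonal projection onto `H₀ᗮ`
and `Q` orthogonal projection onto `span {P η₁, …, P ηₙ}`, the element
`f' = f₀ + Q (P f)` (where `f₀` is the `H₀`-component of `f`) has objective value
`C(⟪ηᵢ, f'⟫) + λ‖P f'‖²` no larger than the objective at `f`. -/
theorem representer_theorem_with_null_space
    {H : Type*} [NormedAddCommGroup H] [InnerProductSpace ℝ H] [CompleteSpace H]
    (H₀ : Submodule ℝ H) [CompleteSpace H₀]
    {n : ℕ} (η : Fin n → H) (C : (Fin n → ℝ) → ℝ) (lam : ℝ) (hlam : 0 < lam)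
    (P : H → H) (hP : ∀ g, P g = (Submodule.orthogonalProjectionOnto H₀ᗮ g : H))
    (S : Submodule ℝ H) (hS : S = Submodule.span ℝ (Set.range fun i => P (η i)))
    [CompleteSpace S]
    (f f' : H) (hf' : f' = (Submodule.orthogonalProjectionOnto H₀ f : H) + (Submodule.orthogonalProjectionOnto S (P f) : H)) :
    C (fun i => ⟪η i, f'⟫_ℝ) + lam * ‖P f'‖ ^ 2 ≤
      C (fun i => ⟪η i, f⟫_ℝ) + lam * ‖P f‖ ^ 2 :=
  representer_theorem_with_null_space_general H₀ η C lam hlam P hP S hS f f' hf'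
end

section
/- The hinge-loss population minimizer estimates the sign of the log odds ratio: for fixed t with p = P(Y = 1 | t) ∈ (0,1), p ≠ 1/2, the minimizer over real numbers f of E[(1 − Yf)_+] = p(1−f)_+ + (1−p)(1+f)_+ is f* = sign(2p − 1) = sign(log(p/(1−p))). -/
/-- The hinge-loss population minimizer estimates the sign of the log odds ratio:
for `p ∈ (0,1)`, `p ≠ 1/2`, the unique minimizer over `f ∈ ℝ` of
`p (1-f)₊ + (1-p)(1+f)₊` is `sign (2p - 1)`. -/
theorem hinge_loss_minimizer_is_sign_log_odds
    (p : ℝ) (hp0 : 0 < p) (hp1 : p < 1) (hp : p ≠ 1 / 2)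
    (L : ℝ → ℝ) (hL : ∀ f, L f = p * max (1 - f) 0 + (1 - p) * max (1 + f) 0)
    (fstar : ℝ) (hfstar : fstar = Real.sign (2 * p - 1)) :
    fstar = Real.sign (Real.log (p / (1 - p))) ∧
    (∀ f : ℝ, L fstar ≤ L f) ∧
    (∀ f : ℝ, f ≠ fstar → L fstar < L f) := by
  have h1p : (0:ℝ) < 1 - p := by linarith
  rcases lt_or_gt_of_ne hp with hlt | hgt
  · -- p < 1/2, fstar = -1
    have hsign : Real.sign (2 * p - 1) = -1 := Real.sign_of_neg (by linarith)
    have hlogneg : Real.log (p / (1 - p)) < 0 :=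
      Real.log_neg (div_pos hp0 h1p) ((div_lt_one h1p).2 (by linarith))
    have hf : fstar = -1 := by rw [hfstar, hsign]
    have hLstar : L fstar = 2 * p := by
      rw [hf, hL]; norm_num; ring
    have hstrict : ∀ f : ℝ, f ≠ fstar → L fstar < L f := by
      intro f hne
      rw [hLstar, hL]
      rcases le_or_gt f (-1) with hc | hc
      · have hne' : f < -1 := lt_of_le_of_ne hc (by rw [hf] at hne; exact hne)
        rw [max_eq_left (by linarith), max_eq_right (by linarith)]
        nlinarith
      · rcases le_or_gt f 1 with hc2 | hc2
        · rw [max_eq_left (by linarith), max_eq_left (by linarith)]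
          nlinarith
        · rw [max_eq_right (by linarith), max_eq_left (by linarith)]
          nlinarith
    refine ⟨by rw [hf, Real.sign_of_neg hlogneg], ?_, hstrict⟩
    intro f
    rcases eq_or_ne f fstar with rfl | hne
    · exact le_refl _
    · exact le_of_lt (hstrict f hne)
  · -- p > 1/2, fstar = 1
    have hsign : Real.sign (2 * p - 1) = 1 := Real.sign_of_pos (by linarith)
    have hlogpos : 0 < Real.log (p / (1 - p)) :=
      Real.log_pos ((one_lt_div h1p).2 (by linarith))
    have hf : fstar = 1 := by rw [hfstar, hsign]
    have hLstar : L fstar = 2 * (1 - p) := by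
      rw [hf, hL]; norm_num; ring
    have hstrict : ∀ f : ℝ, f ≠ fstar → L fstar < L f := by
      intro f hne
      rw [hLstar, hL]
      rcases le_or_gt f (-1) with hc | hc
      · rw [max_eq_left (by linarith), max_eq_right (by linarith)]
        nlinarith
      · rcases le_or_gt f 1 with hc2 | hc2
        · have hne' : f < 1 := lt_of_le_of_ne hc2 (by rw [hf] at hne; exact hne)
          rw [max_eq_left (by linarith), max_eq_left (by linarith)]
          nlinarith
        · rw [max_eq_right (by linarith), max_eq_left (by linarith)]
          nlinarith
    refine ⟨by rw [hf, Real.sign_of_pos hlogpos], ?_, hstrict⟩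
    intro f
    rcases eq_or_ne f fstar with rfl | hne
    · exact le_refl _
    · exact le_of_lt (hstrict f hne)
end
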